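/- arXiv:math/0610020 — 10 statements merged into one kernel-verified Lean document; each statement's English description precedes it below -/
import Mathlib

section
/- For all integers m ≥ 2 and k ≥ 2, one has d_k(m) ≤ d_{k+1}(m); moreover, for all integers m ≥ 3 one has d_1(m) ≤ d_2(m), while d_1(2) = 2 > 1 = d_2(2). Here d_k(m) = (1/k) Σ_{d ∣ k} μ(d) m^{k/d}. -/
set_option maxHeartbeats 1000000

open ArithmeticFunction Finset

/-- `dWitt m k` is `(1/k) * ∑_{d ∣ k} μ(d) m^(k/d)`, the dimension of the space of
Lie polynomials of degree `k` on `m` generators (Witt's formula), as a rational number. -/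
noncomputable def dWitt (m k : ℕ) : ℚ :=
  (1 / (k : ℚ)) * ∑ d ∈ k.divisors, ((ArithmeticFunction.moebius d : ℤ) : ℚ) * (m : ℚ) ^ (k / d)

/-- Integer numerator of Witt's formula. -/
noncomputable def Nw (m k : ℕ) : ℤ :=
  ∑ d ∈ k.divisors, (ArithmeticFunction.moebius d : ℤ) * (m : ℤ) ^ (k / d)

lemma dWitt_eq (m k : ℕ) : dWitt m k = (Nw m k : ℚ) / k := by
  unfold dWitt Nw
  push_cast
  ring

lemma myGeom_le (m : ℕ) (hm : 2 ≤ m) (t : ℕ) :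
    ∑ j ∈ Finset.Icc 1 t, (m : ℤ) ^ j ≤ (m : ℤ) ^ (t + 1) - m := by
  have h1 : (2 : ℤ) ≤ (m : ℤ) := by exact_mod_cast hm
  induction t with
  | zero => simp
  | succ t ih =>
    rw [Finset.sum_Icc_succ_top (by omega)]
    have h2 : (0 : ℤ) ≤ (m : ℤ) ^ (t + 1) := by positivity
    have h3 : (m : ℤ) ^ (t + 1 + 1) = m * m ^ (t + 1) := by ring
    nlinarith

lemma sum_bound (m k s : ℕ) (hm : 2 ≤ m) (hk : k ≠ 0) (hs : 1 ≤ s) (S : Finset ℕ)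
    (hS : S ⊆ k.divisors) (hSs : ∀ d ∈ S, s ≤ d) :
    |∑ d ∈ S, (ArithmeticFunction.moebius d : ℤ) * (m : ℤ) ^ (k / d)|
      ≤ (m : ℤ) ^ (k / s + 1) - m := by
  have step1 : |∑ d ∈ S, (ArithmeticFunction.moebius d : ℤ) * (m : ℤ) ^ (k / d)|
      ≤ ∑ d ∈ S, (m : ℤ) ^ (k / d) := by
    refine (Finset.abs_sum_le_sum_abs _ _).trans (Finset.sum_le_sum fun d _ => ?_)
    rw [abs_mul, abs_pow, Int.abs_natCast]
    calc |(ArithmeticFunction.moebius d : ℤ)| * (m : ℤ) ^ (k / d)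
        ≤ 1 * (m : ℤ) ^ (k / d) := by
          apply mul_le_mul_of_nonneg_right ArithmeticFunction.abs_moebius_le_one
          positivity
      _ = (m : ℤ) ^ (k / d) := one_mul _
  have hinj : ∀ x ∈ S, ∀ y ∈ S, k / x = k / y → x = y := by
    intro x hx y hy hxy
    have hxd : x ∣ k := (Nat.mem_divisors.mp (hS hx)).1
    have hyd : y ∣ k := (Nat.mem_divisors.mp (hS hy)).1
    have e1 := Nat.div_div_self hxd hk
    have e2 := Nat.div_div_self hyd hk
    rw [hxy] at e1
    exact e1.symm.trans e2
  have step2 : ∑ d ∈ S, (m : ℤ) ^ (k / d)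
      = ∑ j ∈ S.image (fun d => k / d), (m : ℤ) ^ j := (Finset.sum_image hinj).symm
  have step3 : S.image (fun d => k / d) ⊆ Finset.Icc 1 (k / s) := by
    intro j hj
    obtain ⟨d, hd, rfl⟩ := Finset.mem_image.mp hj
    have hdd : d ∣ k := (Nat.mem_divisors.mp (hS hd)).1
    have h1 : d ≤ k := Nat.le_of_dvd (Nat.pos_of_ne_zero hk) hdd
    have h2 : 0 < d := Nat.pos_of_mem_divisors (hS hd)
    refine Finset.mem_Icc.mpr ⟨?_, Nat.div_le_div_left (hSs d hd) hs⟩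
    exact (Nat.one_le_div_iff h2).mpr h1
  have step4 : ∑ j ∈ S.image (fun d => k / d), (m : ℤ) ^ j
      ≤ ∑ j ∈ Finset.Icc 1 (k / s), (m : ℤ) ^ j := by
    apply Finset.sum_le_sum_of_subset_of_nonneg step3
    intro i _ _
    positivity
  calc |∑ d ∈ S, (ArithmeticFunction.moebius d : ℤ) * (m : ℤ) ^ (k / d)|
      ≤ ∑ d ∈ S, (m : ℤ) ^ (k / d) := step1
    _ = _ := step2
    _ ≤ ∑ j ∈ Finset.Icc 1 (k / s), (m : ℤ) ^ j := step4
    _ ≤ (m : ℤ) ^ (k / s + 1) - m := myGeom_le m hm _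

lemma Nw_split1 (m k : ℕ) (hk : 1 ≤ k) :
    Nw m k = (m : ℤ) ^ k
      + ∑ d ∈ k.divisors.erase 1, (ArithmeticFunction.moebius d : ℤ) * (m : ℤ) ^ (k / d) := by
  rw [Nw, ← Finset.add_sum_erase _ _ (Nat.one_mem_divisors.2 (by omega))]
  simp

lemma Nw_split2 (m k : ℕ) (hk : 2 ≤ k) (he : 2 ∣ k) :
    Nw m k = (m : ℤ) ^ k - (m : ℤ) ^ (k / 2)
      + ∑ d ∈ (k.divisors.erase 1).erase 2,
          (ArithmeticFunction.moebius d : ℤ) * (m : ℤ) ^ (k / d) := by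
  have h2 : 2 ∈ k.divisors.erase 1 :=
    Finset.mem_erase.mpr ⟨by norm_num, Nat.mem_divisors.mpr ⟨he, by omega⟩⟩
  rw [Nw_split1 m k (by omega), ← Finset.add_sum_erase _ _ h2,
    ArithmeticFunction.moebius_apply_prime Nat.prime_two]
  ring

lemma tail_ge_3 (k : ℕ) : ∀ d ∈ (k.divisors.erase 1).erase 2, 3 ≤ d := by
  intro d hd
  have h1 := Finset.mem_erase.mp hd
  have h2 := Finset.mem_erase.mp h1.2
  have := Nat.pos_of_mem_divisors h2.2
  omega

lemma tail_ge_3' (k : ℕ) (ho : ¬ 2 ∣ k) : ∀ d ∈ k.divisors.erase 1, 3 ≤ d := by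
  intro d hd
  have h1 := Finset.mem_erase.mp hd
  have := Nat.pos_of_mem_divisors h1.2
  have hdvd := (Nat.mem_divisors.mp h1.2).1
  rcases Nat.lt_or_ge d 3 with h | h
  · interval_cases d
    · omega
    · exact absurd hdvd ho
  · exact h

lemma Nw_even_bounds (m k : ℕ) (hm : 2 ≤ m) (hk : 2 ≤ k) (he : 2 ∣ k) :
    (m : ℤ) ^ k - (m : ℤ) ^ (k / 2) - ((m : ℤ) ^ (k / 3 + 1) - m) ≤ Nw m k ∧
    Nw m k ≤ (m : ℤ) ^ k - (m : ℤ) ^ (k / 2) + ((m : ℤ) ^ (k / 3 + 1) - m) := by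
  have hb := sum_bound m k 3 hm (by omega) (by omega) ((k.divisors.erase 1).erase 2)
    (((k.divisors.erase 1).erase_subset 2).trans (k.divisors.erase_subset 1)) (tail_ge_3 k)
  rw [abs_le] at hb
  rw [Nw_split2 m k hk he]
  constructor <;> linarith [hb.1, hb.2]

lemma Nw_odd_bounds (m k : ℕ) (hm : 2 ≤ m) (hk : 2 ≤ k) (ho : ¬ 2 ∣ k) :
    (m : ℤ) ^ k - ((m : ℤ) ^ (k / 3 + 1) - m) ≤ Nw m k ∧
    Nw m k ≤ (m : ℤ) ^ k + ((m : ℤ) ^ (k / 3 + 1) - m) := by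
  have hb := sum_bound m k 3 hm (by omega) (by omega) (k.divisors.erase 1)
    (k.divisors.erase_subset 1) (tail_ge_3' k ho)
  rw [abs_le] at hb
  rw [Nw_split1 m k (by omega)]
  constructor <;> linarith [hb.1, hb.2]

lemma Nw_one (m : ℕ) : Nw m 1 = (m : ℤ) := by
  rw [Nw, show (1 : ℕ).divisors = {1} from by decide]
  simp

lemma Nw_two (m : ℕ) : Nw m 2 = (m : ℤ) ^ 2 - m := by
  have h2 : (ArithmeticFunction.moebius 2 : ℤ) = -1 :=
    ArithmeticFunction.moebius_apply_prime Nat.prime_two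
  rw [Nw, show (2 : ℕ).divisors = {1, 2} from by decide]
  simp [h2]
  ring

lemma Nw_three (m : ℕ) : Nw m 3 = (m : ℤ) ^ 3 - m := by
  have h3 : (ArithmeticFunction.moebius 3 : ℤ) = -1 :=
    ArithmeticFunction.moebius_apply_prime Nat.prime_three
  rw [Nw, show (3 : ℕ).divisors = {1, 3} from by decide]
  simp [h3]
  ring

lemma Nw_four (m : ℕ) : Nw m 4 = (m : ℤ) ^ 4 - (m : ℤ) ^ 2 := by
  have h2 : (ArithmeticFunction.moebius 2 : ℤ) = -1 :=
    ArithmeticFunction.moebius_apply_prime Nat.prime_two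
  have h4 : (ArithmeticFunction.moebius 4 : ℤ) = 0 :=
    ArithmeticFunction.moebius_eq_zero_of_not_squarefree (by decide)
  rw [Nw, show (4 : ℕ).divisors = {1, 2, 4} from by decide]
  simp [h2, h4]
  ring

lemma Nw_five (m : ℕ) : Nw m 5 = (m : ℤ) ^ 5 - m := by
  have h5 : (ArithmeticFunction.moebius 5 : ℤ) = -1 :=
    ArithmeticFunction.moebius_apply_prime (by norm_num)
  rw [Nw, show (5 : ℕ).divisors = {1, 5} from by decide]
  simp [h5]
  ring

lemma Nw_six (m : ℕ) : Nw m 6 = (m : ℤ) ^ 6 - (m : ℤ) ^ 3 - (m : ℤ) ^ 2 + m := by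
  have h2 : (ArithmeticFunction.moebius 2 : ℤ) = -1 :=
    ArithmeticFunction.moebius_apply_prime Nat.prime_two
  have h3 : (ArithmeticFunction.moebius 3 : ℤ) = -1 :=
    ArithmeticFunction.moebius_apply_prime Nat.prime_three
  have h6 : (ArithmeticFunction.moebius 6 : ℤ) = 1 := by
    have h := ArithmeticFunction.isMultiplicative_moebius.map_mul_of_coprime
      (show Nat.Coprime 2 3 by norm_num)
    rw [show (2 * 3 : ℕ) = 6 from rfl] at h
    rw [h, h2, h3]; ring
  rw [Nw, show (6 : ℕ).divisors = {1, 2, 3, 6} from by decide]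
  simp [h2, h3, h6]
  ring

lemma pow_split (m a b c : ℕ) (h : a = b + c) : (m : ℤ) ^ a = (m : ℤ) ^ b * (m : ℤ) ^ c := by
  rw [h, pow_add]

lemma main_int (m k : ℕ) (hm : 2 ≤ m) (hk : 2 ≤ k) :
    ((k : ℤ) + 1) * Nw m k ≤ (k : ℤ) * Nw m (k + 1) := by
  have hm' : (2 : ℤ) ≤ (m : ℤ) := by exact_mod_cast hm
  have p2 : 2 * (m : ℤ) ≤ (m : ℤ) ^ 2 := by nlinarith
  have p3 : 2 * (m : ℤ) ^ 2 ≤ (m : ℤ) ^ 3 := by nlinarith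
  have p4 : 2 * (m : ℤ) ^ 3 ≤ (m : ℤ) ^ 4 := by nlinarith
  have p5 : 2 * (m : ℤ) ^ 4 ≤ (m : ℤ) ^ 5 := by nlinarith
  have p6 : 2 * (m : ℤ) ^ 5 ≤ (m : ℤ) ^ 6 := by nlinarith
  rcases Nat.lt_or_ge k 6 with hk6 | hk6
  · interval_cases k
    · rw [Nw_two, Nw_three]; push_cast; linarith
    · rw [Nw_three, Nw_four]; push_cast; linarith
    · rw [Nw_four, Nw_five]; push_cast; linarith
    · rw [Nw_five, Nw_six]; push_cast; linarith
  · have hkz : (6 : ℤ) ≤ (k : ℤ) := by exact_mod_cast hk6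
    rcases Nat.even_or_odd k with he | hoo
    · -- k even, k+1 odd
      have he2 : 2 ∣ k := he.two_dvd
      have ho : ¬ 2 ∣ (k + 1) := by omega
      have ub := (Nw_even_bounds m k hm (by omega) he2).2
      have lb := (Nw_odd_bounds m (k + 1) hm (by omega) ho).1
      have ee1 : k / 3 + 1 ≤ k / 2 := by omega
      have ee2 : (k + 1) / 3 + 1 ≤ k - 1 := by omega
      have pe1 : (m : ℤ) ^ (k / 3 + 1) ≤ (m : ℤ) ^ (k / 2) :=
        pow_le_pow_right₀ (by linarith) ee1
      have pe2 : (m : ℤ) ^ ((k + 1) / 3 + 1) ≤ (m : ℤ) ^ (k - 1) :=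
        pow_le_pow_right₀ (by linarith) ee2
      have hub : Nw m k ≤ (m : ℤ) ^ k - m := by linarith
      have hlb : (m : ℤ) ^ (k + 1) - (m : ℤ) ^ (k - 1) ≤ Nw m (k + 1) := by linarith
      have q1 : (m : ℤ) ^ k = m ^ 1 * m ^ (k - 1) := pow_split m k 1 (k - 1) (by omega)
      have q2 : (m : ℤ) ^ (k + 1) = m ^ 2 * m ^ (k - 1) := pow_split m (k + 1) 2 (k - 1) (by omega)
      set y := (m : ℤ) ^ (k - 1) with hy
      have hy1 : (1 : ℤ) ≤ y := one_le_pow₀ (by linarith)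
      have d1 : (0 : ℤ) ≤ (k : ℤ) * (m : ℤ) ^ 2 - ((k : ℤ) + 1) * m - k := by
        nlinarith [mul_nonneg (mul_nonneg (by linarith : (0:ℤ) ≤ (k:ℤ)) (by linarith : (0:ℤ) ≤ (m:ℤ))) (by linarith : (0:ℤ) ≤ (m:ℤ) - 2),
          mul_nonneg (by linarith : (0:ℤ) ≤ (k:ℤ) - 1) (by linarith : (0:ℤ) ≤ (m:ℤ) - 2)]
      have key : ((k : ℤ) + 1) * ((m : ℤ) ^ k - m) ≤ (k : ℤ) * ((m : ℤ) ^ (k + 1) - (m : ℤ) ^ (k - 1)) := by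
        rw [q1, q2]
        nlinarith [mul_nonneg (by linarith : (0:ℤ) ≤ y) d1]
      calc ((k : ℤ) + 1) * Nw m k ≤ ((k : ℤ) + 1) * ((m : ℤ) ^ k - m) := by
            apply mul_le_mul_of_nonneg_left hub (by linarith)
        _ ≤ (k : ℤ) * ((m : ℤ) ^ (k + 1) - (m : ℤ) ^ (k - 1)) := key
        _ ≤ (k : ℤ) * Nw m (k + 1) := by
            apply mul_le_mul_of_nonneg_left hlb (by linarith)
    · -- k odd, k+1 even
      have ho : ¬ 2 ∣ k := by rcases hoo with ⟨j, hj⟩; omega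
      have hk7 : 7 ≤ k := by omega
      have he2 : 2 ∣ (k + 1) := by omega
      have ub := (Nw_odd_bounds m k hm (by omega) ho).2
      have lb := (Nw_even_bounds m (k + 1) hm (by omega) he2).1
      have oe1 : k / 3 + 1 ≤ k - 3 := by omega
      have oe2 : (k + 1) / 2 ≤ k - 2 := by omega
      have oe3 : (k + 1) / 3 + 1 ≤ k - 2 := by omega
      have pe1 : (m : ℤ) ^ (k / 3 + 1) ≤ (m : ℤ) ^ (k - 3) :=
        pow_le_pow_right₀ (by linarith) oe1
      have pe2 : (m : ℤ) ^ ((k + 1) / 2) ≤ (m : ℤ) ^ (k - 2) :=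
        pow_le_pow_right₀ (by linarith) oe2
      have pe3 : (m : ℤ) ^ ((k + 1) / 3 + 1) ≤ (m : ℤ) ^ (k - 2) :=
        pow_le_pow_right₀ (by linarith) oe3
      have q1 : (m : ℤ) ^ k = m ^ 3 * m ^ (k - 3) := pow_split m k 3 (k - 3) (by omega)
      have q2 : (m : ℤ) ^ (k + 1) = m ^ 4 * m ^ (k - 3) := pow_split m (k + 1) 4 (k - 3) (by omega)
      have q3 : (m : ℤ) ^ (k - 2) = m ^ 1 * m ^ (k - 3) := pow_split m (k - 2) 1 (k - 3) (by omega)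
      have q4 : (m : ℤ) ^ (k - 1) = m ^ 2 * m ^ (k - 3) := pow_split m (k - 1) 2 (k - 3) (by omega)
      set y := (m : ℤ) ^ (k - 3) with hy
      have hy1 : (1 : ℤ) ≤ y := one_le_pow₀ (by linarith)
      have hub : Nw m k ≤ (m : ℤ) ^ k + y := by linarith
      have hlb : (m : ℤ) ^ (k + 1) - (m : ℤ) ^ (k - 1) ≤ Nw m (k + 1) := by
        have h2 : 2 * (m : ℤ) ^ (k - 2) ≤ (m : ℤ) ^ (k - 1) := by
          rw [q3, q4]; nlinarith
        linarith
      have d2 : (0 : ℤ) ≤ (k : ℤ) * (m : ℤ) ^ 4 - ((k : ℤ) + 1) * (m : ℤ) ^ 3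
          - (k : ℤ) * (m : ℤ) ^ 2 - ((k : ℤ) + 1) := by
        have h1 : 2 * ((k : ℤ) * (m : ℤ) ^ 3) ≤ (k : ℤ) * (m : ℤ) ^ 4 := by
          nlinarith [mul_nonneg (mul_nonneg (by linarith : (0:ℤ) ≤ (k:ℤ)) (by positivity : (0:ℤ) ≤ (m:ℤ)^3)) (by linarith : (0:ℤ) ≤ (m:ℤ) - 2)]
        have h2 : 2 * (((k : ℤ) - 1) * (m : ℤ) ^ 2) ≤ ((k : ℤ) - 1) * (m : ℤ) ^ 3 := by
          nlinarith [mul_nonneg (mul_nonneg (by linarith : (0:ℤ) ≤ (k:ℤ) - 1) (by positivity : (0:ℤ) ≤ (m:ℤ)^2)) (by linarith : (0:ℤ) ≤ (m:ℤ) - 2)]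
        have h3 : 4 * ((k : ℤ) - 2) ≤ ((k : ℤ) - 2) * (m : ℤ) ^ 2 := by
          nlinarith [mul_nonneg (by linarith : (0:ℤ) ≤ (k:ℤ) - 2) (by nlinarith : (0:ℤ) ≤ (m:ℤ)^2 - 4)]
        have hkz7 : (7 : ℤ) ≤ (k : ℤ) := by exact_mod_cast hk7
        linarith
      have key : ((k : ℤ) + 1) * ((m : ℤ) ^ k + y) ≤ (k : ℤ) * ((m : ℤ) ^ (k + 1) - (m : ℤ) ^ (k - 1)) := by
        rw [q1, q2, q4]
        nlinarith [mul_nonneg (by linarith : (0:ℤ) ≤ y) d2]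
      calc ((k : ℤ) + 1) * Nw m k ≤ ((k : ℤ) + 1) * ((m : ℤ) ^ k + y) := by
            apply mul_le_mul_of_nonneg_left hub (by linarith)
        _ ≤ (k : ℤ) * ((m : ℤ) ^ (k + 1) - (m : ℤ) ^ (k - 1)) := key
        _ ≤ (k : ℤ) * Nw m (k + 1) := by
            apply mul_le_mul_of_nonneg_left hlb (by linarith)

theorem stmt_2 :
    (∀ m k : ℕ, 2 ≤ m → 2 ≤ k → dWitt m k ≤ dWitt m (k + 1)) ∧
    (∀ m : ℕ, 3 ≤ m → dWitt m 1 ≤ dWitt m 2) ∧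
    (dWitt 2 1 = 2 ∧ dWitt 2 2 = 1 ∧ dWitt 2 2 < dWitt 2 1) := by
  refine ⟨fun m k hm hk => ?_, fun m hm => ?_, ?_, ?_, ?_⟩
  · rw [dWitt_eq, dWitt_eq]
    have h := main_int m k hm hk
    have hk0 : (0 : ℚ) < (k : ℚ) := by exact_mod_cast Nat.lt_of_lt_of_le Nat.zero_lt_two hk
    have hk1 : (0 : ℚ) < ((k + 1 : ℕ) : ℚ) := by positivity
    rw [div_le_div_iff₀ hk0 hk1]
    have h' : ((k : ℚ) + 1) * (Nw m k : ℚ) ≤ (k : ℚ) * (Nw m (k + 1) : ℚ) := by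
      exact_mod_cast h
    push_cast
    linarith
  · rw [dWitt_eq, dWitt_eq, Nw_one, Nw_two]
    have hm' : (3 : ℚ) ≤ (m : ℚ) := by exact_mod_cast hm
    rw [div_le_div_iff₀ (by norm_num) (by norm_num)]
    push_cast
    nlinarith
  · rw [dWitt_eq, Nw_one]; norm_num
  · rw [dWitt_eq, Nw_two]; norm_num
  · rw [dWitt_eq, dWitt_eq, Nw_one, Nw_two]; norm_num
end

section
/- For all integers m ≥ 2 and k ≥ 2, writing t(k) for the largest proper divisor of k (i.e. t(k) = max{d : d ∣ k, d < k}), one has m^k − m^{t(k)} − Σ_{s=1}^{t(k)−1} m^s ≤ k·d_k(m) ≤ m^k − m^{t(k)} + Σ_{s=1}^{t(k)−1} m^s, where d_k(m) = (1/k) Σ_{d ∣ k} μ(d) m^{k/d}. -/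
/-- The largest proper divisor of `k`. -/
noncomputable def maxProperDiv (k : ℕ) : ℕ := sSup {d : ℕ | d ∣ k ∧ d < k}

theorem stmt_3 (m k : ℕ) (hm : 2 ≤ m) (hk : 2 ≤ k) :
    (m : ℚ) ^ k - (m : ℚ) ^ maxProperDiv k
        - ∑ s ∈ Finset.Icc 1 (maxProperDiv k - 1), (m : ℚ) ^ s ≤ (k : ℚ) * dWitt m k ∧
    (k : ℚ) * dWitt m k ≤ (m : ℚ) ^ k - (m : ℚ) ^ maxProperDiv k
        + ∑ s ∈ Finset.Icc 1 (maxProperDiv k - 1), (m : ℚ) ^ s := by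
  have hk0 : k ≠ 0 := by omega
  set p := k.minFac with hp
  have hpprime : p.Prime := Nat.minFac_prime (by omega)
  have hpd : p ∣ k := Nat.minFac_dvd k
  have hp2 : 2 ≤ p := hpprime.two_le
  set t := k / p with ht
  have hpt : p * t = k := Nat.mul_div_cancel' hpd
  have htpos : 0 < t := Nat.div_pos (Nat.minFac_le (by omega)) hpprime.pos
  have htdvd : t ∣ k := ⟨p, by rw [mul_comm]; exact hpt.symm⟩
  have htlt : t < k := Nat.div_lt_self (by omega) (by omega)
  -- any proper divisor is at most t
  have hub : ∀ d : ℕ, d ∣ k → d < k → d ≤ t := by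
    intro d hd hdk
    have hd0 : 0 < d := Nat.pos_of_dvd_of_pos hd (by omega)
    have he : d * (k / d) = k := Nat.mul_div_cancel' hd
    have he2 : 2 ≤ k / d := by
      rcases Nat.lt_or_ge (k / d) 2 with h | h
      · interval_cases h' : (k / d) <;> omega
      · exact h
    have hpe : p ≤ k / d := Nat.minFac_le_of_dvd he2 (Nat.div_dvd_of_dvd hd)
    have h3 : p * d ≤ p * t := by
      calc p * d = d * p := mul_comm _ _
        _ ≤ d * (k / d) := Nat.mul_le_mul_left d hpe
        _ = k := he
        _ = p * t := hpt.symm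
    exact Nat.le_of_mul_le_mul_left h3 hpprime.pos
  have hmax : maxProperDiv k = t := by
    unfold maxProperDiv
    apply le_antisymm
    · exact csSup_le ⟨1, one_dvd k, by omega⟩ (fun d ⟨hd, hdk⟩ => hub d hd hdk)
    · exact le_csSup ⟨t, fun d ⟨hd, hdk⟩ => hub d hd hdk⟩ ⟨htdvd, htlt⟩
  rw [hmax]
  -- rewrite k * dWitt as the sum
  have hS : (k : ℚ) * dWitt m k
      = ∑ d ∈ k.divisors, ((ArithmeticFunction.moebius d : ℤ) : ℚ) * (m : ℚ) ^ (k / d) := by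
    rw [dWitt]
    have : (k : ℚ) ≠ 0 := Nat.cast_ne_zero.mpr hk0
    field_simp
  rw [hS]
  -- split off divisors 1 and p
  have h1mem : 1 ∈ k.divisors := Nat.one_mem_divisors.mpr hk0
  have hpmem : p ∈ k.divisors := Nat.mem_divisors.mpr ⟨hpd, hk0⟩
  have h1p : (1 : ℕ) ≠ p := by omega
  have hsub : ({1, p} : Finset ℕ) ⊆ k.divisors := by
    intro x hx
    simp only [Finset.mem_insert, Finset.mem_singleton] at hx
    rcases hx with rfl | rfl <;> assumption
  set A := k.divisors \ ({1, p} : Finset ℕ) with hA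
  have hsplit : ∑ d ∈ k.divisors, ((ArithmeticFunction.moebius d : ℤ) : ℚ) * (m : ℚ) ^ (k / d)
      = (m : ℚ) ^ k - (m : ℚ) ^ t
        + ∑ d ∈ A, ((ArithmeticFunction.moebius d : ℤ) : ℚ) * (m : ℚ) ^ (k / d) := by
    rw [← Finset.sum_sdiff hsub, Finset.sum_pair h1p]
    have hm1 : ArithmeticFunction.moebius 1 = 1 := by simp
    have hmp : ArithmeticFunction.moebius p = -1 := ArithmeticFunction.moebius_apply_prime hpprime
    rw [hm1, hmp]
    simp only [Nat.div_one]
    ring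
  rw [hsplit]
  -- bound the remainder sum
  have hbound : ∀ d ∈ A, |((ArithmeticFunction.moebius d : ℤ) : ℚ) * (m : ℚ) ^ (k / d)|
      ≤ (m : ℚ) ^ (k / d) := by
    intro d _
    rw [abs_mul, abs_pow, Nat.abs_cast]
    have h1 : |((ArithmeticFunction.moebius d : ℤ) : ℚ)| ≤ 1 := by
      have h0 : |(ArithmeticFunction.moebius d : ℤ)| ≤ 1 :=
        ArithmeticFunction.abs_moebius_le_one
      exact_mod_cast h0
    calc |((ArithmeticFunction.moebius d : ℤ) : ℚ)| * (m : ℚ) ^ (k / d)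
        ≤ 1 * (m : ℚ) ^ (k / d) := by
          apply mul_le_mul_of_nonneg_right h1 (by positivity)
      _ = (m : ℚ) ^ (k / d) := one_mul _
  have hAimg : ∀ d ∈ A, k / d ∈ Finset.Icc 1 (t - 1) := by
    intro d hd
    simp only [hA, Finset.mem_sdiff, Nat.mem_divisors, Finset.mem_insert,
      Finset.mem_singleton] at hd
    obtain ⟨⟨hdvd, _⟩, hne⟩ := hd
    push_neg at hne
    obtain ⟨hne1, hnep⟩ := hne
    have hd0 : 0 < d := Nat.pos_of_dvd_of_pos hdvd (by omega)
    have hd2 : 2 ≤ d := by omega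
    have hkd_dvd : k / d ∣ k := Nat.div_dvd_of_dvd hdvd
    have hkd_lt : k / d < k := Nat.div_lt_self (by omega) hd2
    have hkd_pos : 0 < k / d := Nat.div_pos (Nat.le_of_dvd (by omega) hdvd) hd0
    have hle : k / d ≤ t := hub _ hkd_dvd hkd_lt
    have hne_t : k / d ≠ t := by
      intro h
      apply hnep
      have h1 : d * (k / d) = k := Nat.mul_div_cancel' hdvd
      have h1' : d * t = k := by rw [← h]; exact h1
      have : d * t = p * t := by omega
      exact Nat.eq_of_mul_eq_mul_right htpos this
    exact Finset.mem_Icc.mpr ⟨hkd_pos, by omega⟩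
  have hinj : ∀ d₁ ∈ A, ∀ d₂ ∈ A, k / d₁ = k / d₂ → d₁ = d₂ := by
    intro d₁ h₁ d₂ h₂ h
    simp only [hA, Finset.mem_sdiff, Nat.mem_divisors] at h₁ h₂
    have e₁ : k / (k / d₁) = d₁ := Nat.div_div_self h₁.1.1 hk0
    have e₂ : k / (k / d₂) = d₂ := Nat.div_div_self h₂.1.1 hk0
    rw [← e₁, ← e₂, h]
  have hRbound : |∑ d ∈ A, ((ArithmeticFunction.moebius d : ℤ) : ℚ) * (m : ℚ) ^ (k / d)|
      ≤ ∑ s ∈ Finset.Icc 1 (t - 1), (m : ℚ) ^ s := by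
    calc |∑ d ∈ A, ((ArithmeticFunction.moebius d : ℤ) : ℚ) * (m : ℚ) ^ (k / d)|
        ≤ ∑ d ∈ A, |((ArithmeticFunction.moebius d : ℤ) : ℚ) * (m : ℚ) ^ (k / d)| :=
          Finset.abs_sum_le_sum_abs _ _
      _ ≤ ∑ d ∈ A, (m : ℚ) ^ (k / d) := Finset.sum_le_sum hbound
      _ = ∑ s ∈ A.image (fun d => k / d), (m : ℚ) ^ s := by
          rw [Finset.sum_image hinj]
      _ ≤ ∑ s ∈ Finset.Icc 1 (t - 1), (m : ℚ) ^ s := by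
          apply Finset.sum_le_sum_of_subset_of_nonneg
          · intro s hs
            obtain ⟨d, hd, rfl⟩ := Finset.mem_image.mp hs
            exact hAimg d hd
          · intro s _ _; positivity
  rw [abs_le] at hRbound
  constructor <;> linarith [hRbound.1, hRbound.2]
end

section
/- For every integer m ≥ 2, setting d_1 = m, d_2 = (m² − m)/2, d_3 = (m³ − m)/3, d_4 = (m⁴ − m²)/4, the inequality 6·d_4·d_1 + d_2·d_1 + d_2·d_3 + 4·d_3·d_1 ≥ 2·d_4·d_3 holds if and only if m⁴ + m³ − 11m² − 18m − 10 < 0, which in turn holds if and only if m ≤ 3. -/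
theorem stmt_6 (m : ℕ) (hm : 2 ≤ m)
    (d₁ d₂ d₃ d₄ : ℚ)
    (h₁ : d₁ = (m : ℚ)) (h₂ : d₂ = ((m : ℚ) ^ 2 - m) / 2)
    (h₃ : d₃ = ((m : ℚ) ^ 3 - m) / 3) (h₄ : d₄ = ((m : ℚ) ^ 4 - (m : ℚ) ^ 2) / 4) :
    ((6 * d₄ * d₁ + d₂ * d₁ + d₂ * d₃ + 4 * d₃ * d₁ ≥ 2 * d₄ * d₃) ↔
      (m : ℚ) ^ 4 + (m : ℚ) ^ 3 - 11 * (m : ℚ) ^ 2 - 18 * m - 10 < 0) ∧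
    (((m : ℚ) ^ 4 + (m : ℚ) ^ 3 - 11 * (m : ℚ) ^ 2 - 18 * m - 10 < 0) ↔ m ≤ 3) := by
  subst h₁ h₂ h₃ h₄
  have key : ((m : ℚ) ^ 4 + (m : ℚ) ^ 3 - 11 * (m : ℚ) ^ 2 - 18 * m - 10 < 0) ↔ m ≤ 3 := by
    constructor
    · intro h
      by_contra hle
      push_neg at hle
      have h4 : (4 : ℚ) ≤ (m : ℚ) := by exact_mod_cast hle
      nlinarith [sq_nonneg ((m : ℚ) - 4), sq_nonneg (m : ℚ)]
    · intro h
      interval_cases m <;> norm_num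
  refine ⟨Iff.trans ?_ key.symm, key⟩
  have hm2 : (2 : ℚ) ≤ (m : ℚ) := by exact_mod_cast hm
  constructor
  · intro h
    by_contra hle
    push_neg at hle
    have h4 : (4 : ℚ) ≤ (m : ℚ) := by exact_mod_cast hle
    nlinarith [sq_nonneg ((m : ℚ) - 4), sq_nonneg (m : ℚ), sq_nonneg ((m:ℚ)^2 - 4), sq_nonneg ((m:ℚ)^3)]
  · intro h
    interval_cases m <;> norm_num
end

section
/- For all integers m ≥ 2 and i, j ≥ 1, one has 1/d_i(m) + 1/d_j(m) ≥ 1/d_{i+j}(m), and the inequality is strict unless m = 2 and i = j = 1, in which case both sides equal 1. Here d_k(m) = (1/k) Σ_{d ∣ k} μ(d) m^{k/d}. -/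
open ArithmeticFunction Finset

def wittNumerator (m k : ℕ) : ℚ :=
  ∑ d ∈ k.divisors, ((moebius d : ℤ) : ℚ) * (m : ℚ) ^ (k / d)

lemma dWitt_eq_wittNumerator_div (m k : ℕ) : dWitt m k = wittNumerator m k / k :=
  one_div_mul_eq_div _ _

lemma wittNumerator_eq_pow_add_sum_properDivisors (m : ℕ) {k : ℕ} (hk : k ≠ 0) :
    wittNumerator m k =
      (m : ℚ) ^ k + ∑ d ∈ k.properDivisors, ((moebius (k / d) : ℤ) : ℚ) * (m : ℚ) ^ d := by
  have hflip : wittNumerator m k = ∑ d ∈ k.divisors, ((moebius (k / d) : ℤ) : ℚ) * (m : ℚ) ^ d := by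
    rw [wittNumerator, ← Nat.sum_div_divisors k]
    refine sum_congr rfl fun d hd ↦ ?_
    rw [Nat.div_div_self (Nat.dvd_of_mem_divisors hd) hk]
  rw [hflip, ← Nat.cons_self_properDivisors hk, sum_cons, Nat.div_self (Nat.pos_of_ne_zero hk)]
  simp

lemma abs_wittNumerator_sub_pow_le {m k : ℕ} (hm : 2 ≤ m) (hk : k ≠ 0) :
    |wittNumerator m k - (m : ℚ) ^ k| ≤ (m : ℚ) ^ (k / 2 + 1) := by
  have hgeom : ∑ d ∈ k.properDivisors, m ^ d < m ^ (k / 2 + 1) := by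
    refine Nat.geomSum_lt hm fun d hd ↦ Nat.lt_succ_of_le ?_
    have h2 := Nat.one_lt_div_of_mem_properDivisors hd
    rw [Nat.le_div_iff_mul_le two_pos]
    calc d * 2 ≤ d * (k / d) := Nat.mul_le_mul_left d h2
      _ ≤ k := Nat.mul_div_le k d
  rw [wittNumerator_eq_pow_add_sum_properDivisors m hk, add_sub_cancel_left]
  calc |∑ d ∈ k.properDivisors, ((moebius (k / d) : ℤ) : ℚ) * (m : ℚ) ^ d|
      ≤ ∑ d ∈ k.properDivisors, |((moebius (k / d) : ℤ) : ℚ) * (m : ℚ) ^ d| :=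
        abs_sum_le_sum_abs _ _
    _ ≤ ∑ d ∈ k.properDivisors, (m : ℚ) ^ d := by
        refine sum_le_sum fun d _ ↦ ?_
        rw [abs_mul, abs_of_nonneg (by positivity : (0 : ℚ) ≤ (m : ℚ) ^ d)]
        exact mul_le_of_le_one_left (by positivity) (mod_cast abs_moebius_le_one)
    _ ≤ (m : ℚ) ^ (k / 2 + 1) := mod_cast hgeom.le

lemma wittNumerator_one (m : ℕ) : wittNumerator m 1 = m := by
  simp [wittNumerator]

lemma wittNumerator_prime (m : ℕ) {p : ℕ} (hp : p.Prime) :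
    wittNumerator m p = (m : ℚ) ^ p - m := by
  rw [wittNumerator, hp.divisors, sum_pair hp.one_lt.ne, moebius_apply_prime hp,
    Nat.div_self hp.pos, Nat.div_one]
  simp [sub_eq_add_neg]

lemma wittNumerator_four (m : ℕ) : wittNumerator m 4 = (m : ℚ) ^ 4 - (m : ℚ) ^ 2 := by
  have hμ4 : moebius 4 = 0 := moebius_eq_zero_of_not_squarefree (by decide)
  rw [wittNumerator, show Nat.divisors 4 = {1, 2, 4} by decide, sum_insert (by decide),
    sum_pair (by decide), moebius_apply_prime Nat.prime_two, hμ4]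
  norm_num
  ring

lemma wittNumerator_six (m : ℕ) :
    wittNumerator m 6 = (m : ℚ) ^ 6 - (m : ℚ) ^ 3 - (m : ℚ) ^ 2 + m := by
  have hμ6 : moebius 6 = 1 := by
    rw [show 6 = 2 * 3 from rfl, isMultiplicative_moebius.map_mul_of_coprime (by norm_num),
      moebius_apply_prime Nat.prime_two, moebius_apply_prime Nat.prime_three]
    rfl
  rw [wittNumerator, show Nat.divisors 6 = {1, 2, 3, 6} by decide, sum_insert (by decide),
    sum_insert (by decide), sum_pair (by decide), moebius_apply_prime Nat.prime_two,
    moebius_apply_prime Nat.prime_three, hμ6]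
  norm_num
  ring

lemma succ_mul_wittNumerator_le_of_six_le {m k : ℕ} (hm : 2 ≤ m) (hk : 6 ≤ k) :
    ((k : ℚ) + 1) * wittNumerator m k ≤ k * wittNumerator m (k + 1) := by
  have hq : (2 : ℚ) ≤ m := mod_cast hm
  set q : ℚ := (m : ℚ)
  set P : ℚ := q ^ ((k + 1) / 2 + 1)
  have hq1 : (1 : ℚ) ≤ q := by linarith
  have hK : (6 : ℚ) ≤ k := mod_cast hk
  have hupper : wittNumerator m k ≤ q ^ k + P := by
    have habs := (abs_le.1 (abs_wittNumerator_sub_pow_le hm (by omega : k ≠ 0))).2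
    have hpow : q ^ (k / 2 + 1) ≤ P := pow_le_pow_right₀ hq1 (by omega)
    linarith
  have hlower : q ^ (k + 1) - P ≤ wittNumerator m (k + 1) := by
    linarith [(abs_le.1 (abs_wittNumerator_sub_pow_le hm (by omega : k + 1 ≠ 0))).1]
  have hdouble : 2 * q ^ k ≤ q ^ (k + 1) := by
    rw [pow_succ, mul_comm]; gcongr
  -- `(k + 1) / 2 + 3 ≤ k` is where `6 ≤ k` is needed
  have hgap : 4 * P ≤ q ^ k := by
    calc 4 * P ≤ q ^ 2 * P := by gcongr; nlinarith
      _ = q ^ (2 + ((k + 1) / 2 + 1)) := by rw [pow_add]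
      _ ≤ q ^ k := pow_le_pow_right₀ hq1 (by omega)
  have hP : 0 ≤ P := by positivity
  have hkP : 6 * P ≤ k * P := mul_le_mul_of_nonneg_right hK hP
  linarith [mul_le_mul_of_nonneg_left hupper (by linarith : (0 : ℚ) ≤ k + 1),
    mul_le_mul_of_nonneg_left hlower (by linarith : (0 : ℚ) ≤ k),
    mul_le_mul_of_nonneg_left hdouble (by linarith : (0 : ℚ) ≤ k),
    mul_le_mul_of_nonneg_left hgap (by linarith : (0 : ℚ) ≤ k - 1)]

lemma succ_mul_wittNumerator_le {m k : ℕ} (hm : 2 ≤ m) (hk : 1 ≤ k) (h : 3 ≤ m ∨ 2 ≤ k) :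
    ((k : ℚ) + 1) * wittNumerator m k ≤ k * wittNumerator m (k + 1) := by
  rcases le_or_gt 6 k with hk6 | hk6
  · exact succ_mul_wittNumerator_le_of_six_le hm hk6
  interval_cases k <;> norm_num only
  · have h3 : (3 : ℚ) ≤ m := mod_cast (by omega : 3 ≤ m)
    rw [wittNumerator_one, wittNumerator_prime m Nat.prime_two]
    nlinarith
  all_goals
    obtain ⟨n, hn, hmn⟩ : ∃ n : ℚ, 0 ≤ n ∧ (m : ℚ) = n + 2 :=
      ⟨m - 2, sub_nonneg.2 (mod_cast hm), by ring⟩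
    simp only [wittNumerator_prime m Nat.prime_two, wittNumerator_prime m Nat.prime_three,
      wittNumerator_four, wittNumerator_prime m Nat.prime_five, wittNumerator_six, hmn]
    rw [← sub_nonneg]
    ring_nf
    positivity

lemma dWitt_le_dWitt_succ {m k : ℕ} (hm : 2 ≤ m) (hk : 1 ≤ k) (h : 3 ≤ m ∨ 2 ≤ k) :
    dWitt m k ≤ dWitt m (k + 1) := by
  rw [dWitt_eq_wittNumerator_div, dWitt_eq_wittNumerator_div,
    div_le_div_iff₀ (by exact_mod_cast hk) (by positivity), Nat.cast_succ, mul_comm,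
    mul_comm (wittNumerator m (k + 1))]
  exact succ_mul_wittNumerator_le hm hk h

lemma dWitt_le_dWitt {m a b : ℕ} (hm : 2 ≤ m) (ha : 1 ≤ a) (h : 3 ≤ m ∨ 2 ≤ a) (hab : a ≤ b) :
    dWitt m a ≤ dWitt m b := by
  induction b, hab using Nat.le_induction with
  | base => exact le_rfl
  | succ n han ih => exact ih.trans (dWitt_le_dWitt_succ hm (by omega) (by omega))

lemma dWitt_one (m : ℕ) : dWitt m 1 = m := by
  simp [dWitt_eq_wittNumerator_div, wittNumerator_one]

lemma dWitt_two (m : ℕ) : dWitt m 2 = ((m : ℚ) ^ 2 - m) / 2 := by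
  simp [dWitt_eq_wittNumerator_div, wittNumerator_prime m Nat.prime_two]

lemma dWitt_pos {m k : ℕ} (hm : 2 ≤ m) (hk : 1 ≤ k) : 0 < dWitt m k := by
  have hq : (2 : ℚ) ≤ m := mod_cast hm
  rcases hk.eq_or_lt with rfl | hk2
  · rw [dWitt_one]; linarith
  · refine lt_of_lt_of_le ?_ (dWitt_le_dWitt hm one_le_two (.inr le_rfl) hk2)
    rw [dWitt_two]; nlinarith

lemma one_div_dWitt_add_lt {m i j : ℕ} (hm : 2 ≤ m) (hi : 1 ≤ i) (hij : i ≤ j)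
    (h : 3 ≤ m ∨ 2 ≤ j) : 1 / dWitt m (i + j) < 1 / dWitt m i + 1 / dWitt m j := by
  have hj : 1 ≤ j := hi.trans hij
  have hle : 1 / dWitt m (i + j) ≤ 1 / dWitt m j :=
    one_div_le_one_div_of_le (dWitt_pos hm hj) (dWitt_le_dWitt hm hj h (by omega))
  have hi_pos := one_div_pos.2 (dWitt_pos hm hi)
  linarith

theorem stmt_8 (m i j : ℕ) (hm : 2 ≤ m) (hi : 1 ≤ i) (hj : 1 ≤ j) :
    1 / dWitt m (i + j) ≤ 1 / dWitt m i + 1 / dWitt m j ∧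
    (¬(m = 2 ∧ i = 1 ∧ j = 1) → 1 / dWitt m (i + j) < 1 / dWitt m i + 1 / dWitt m j) ∧
    ((m = 2 ∧ i = 1 ∧ j = 1) →
      1 / dWitt m i + 1 / dWitt m j = 1 ∧ 1 / dWitt m (i + j) = 1) := by
  by_cases hexc : m = 2 ∧ i = 1 ∧ j = 1
  · obtain ⟨rfl, rfl, rfl⟩ := hexc
    norm_num [dWitt_one, dWitt_two]
  have hlt : 1 / dWitt m (i + j) < 1 / dWitt m i + 1 / dWitt m j := by
    rcases le_total i j with hij | hji
    · exact one_div_dWitt_add_lt hm hi hij (by omega)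
    · rw [add_comm i, add_comm (1 / dWitt m i)]
      exact one_div_dWitt_add_lt hm hj hji (by omega)
  exact ⟨hlt.le, fun _ ↦ hlt, fun h ↦ absurd h hexc⟩
end

section
/- Let m ≥ 2 and p ≥ 3 be integers. If d_{p−1}(m) > m·p·(p−2), then 1/m − (p−2)(p+1)/(2 d_{p−1}(m)) > (p−2)(p−1)/(2 d_p(m)). Here d_k(m) = (1/k) Σ_{d ∣ k} μ(d) m^{k/d}. -/
/-!
Witt's formula gives `|k d_k(m) - m ^ k| ≤ 2 m ^ ⌊k/2⌋`: the proper divisors `d` of `k`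
contribute terms `± m ^ d` with `d ≤ k / 2`, and `∑_{j=1}^{n} m ^ j ≤ 2 m ^ n` for `m ≥ 2`.
Hence the hypothesis forces `m ^ (p-1)` to be large compared with `p³`, and this in turn gives
`d_p(m) ≥ m p (p-2) =: C`. The claim then follows from
`1/m = (p-2)(p+1)/(2C) + (p-2)(p-1)/(2C)`, comparing each term with the corresponding one
of the claim.
-/

open Finset ArithmeticFunction
open scoped ArithmeticFunction.Moebius

theorem Nat.le_div_two_of_mem_properDivisors {d n : ℕ} (h : d ∈ n.properDivisors) :
    d ≤ n / 2 := by
  obtain ⟨⟨c, rfl⟩, hlt⟩ := Nat.mem_properDivisors.mp h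
  have hc : 2 ≤ c := by
    rcases c with _ | _ | c <;> simp_all
  rw [Nat.le_div_iff_mul_le two_pos]
  exact Nat.mul_le_mul_left d hc

theorem sum_divisors_moebius_mul_pow_eq {R : Type*} [CommRing R] {x : R} {k : ℕ} (hk : k ≠ 0) :
    ∑ d ∈ k.divisors, ((μ d : ℤ) : R) * x ^ (k / d) =
      x ^ k + ∑ d ∈ k.properDivisors, ((μ (k / d) : ℤ) : R) * x ^ d := by
  rw [← Nat.sum_div_divisors, ← Nat.cons_self_properDivisors hk, sum_cons,
    Nat.div_self (Nat.pos_of_ne_zero hk), Nat.div_one, moebius_apply_one, Int.cast_one, one_mul]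
  exact congrArg _ (sum_congr rfl fun d hd => by
    rw [Nat.div_div_self (Nat.mem_properDivisors.mp hd).1 hk])

section OrderedRing

variable {R : Type*} [CommRing R] [LinearOrder R] [IsStrictOrderedRing R]

theorem sum_Icc_one_pow_le_two_mul_pow {x : R} (hx : 2 ≤ x) (n : ℕ) :
    ∑ j ∈ Icc 1 n, x ^ j ≤ 2 * x ^ n := by
  induction n with
  | zero => simp
  | succ n ih =>
    rw [sum_Icc_succ_top (by omega), pow_succ]
    nlinarith [pow_nonneg (zero_le_two.trans hx) n]

theorem abs_sum_divisors_moebius_mul_pow_sub_pow_le {x : R} (hx : 2 ≤ x) {k : ℕ}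
    (hk : k ≠ 0) :
    |∑ d ∈ k.divisors, ((μ d : ℤ) : R) * x ^ (k / d) - x ^ k| ≤ 2 * x ^ (k / 2) := by
  have hx0 : 0 ≤ x := zero_le_two.trans hx
  rw [sum_divisors_moebius_mul_pow_eq hk, add_sub_cancel_left]
  calc |∑ d ∈ k.properDivisors, ((μ (k / d) : ℤ) : R) * x ^ d|
      ≤ ∑ d ∈ k.properDivisors, x ^ d := by
        refine (abs_sum_le_sum_abs _ _).trans (sum_le_sum fun d _ => ?_)
        rw [abs_mul, abs_of_nonneg (pow_nonneg hx0 d)]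
        exact mul_le_of_le_one_left (pow_nonneg hx0 d) (by exact_mod_cast abs_moebius_le_one)
    _ ≤ ∑ j ∈ Icc 1 (k / 2), x ^ j := by
        refine sum_le_sum_of_subset_of_nonneg (fun d hd => mem_Icc.mpr ⟨?_, ?_⟩)
          fun j _ _ => pow_nonneg hx0 j
        · exact Nat.pos_of_mem_properDivisors hd
        · exact Nat.le_div_two_of_mem_properDivisors hd
    _ ≤ 2 * x ^ (k / 2) := sum_Icc_one_pow_le_two_mul_pow hx _

-- If `4 u > v`, then `u² - 2u > v²/16 - v/2` because `t ↦ t² - 2t` increases for `t ≥ 1`.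
theorem le_sub_two_mul_of_add_lt {X u S v : R} (hu : u ^ 2 ≤ X) (hlt : S + v < X + 2 * u)
    (hv : 4 ≤ v) (hSv : 16 * S ≤ v ^ 2 - 8 * v) : S ≤ X - 2 * u := by
  rcases le_or_gt (4 * u) v with h | h
  · linarith
  · nlinarith [mul_pos (sub_pos.mpr h) (show 0 < 4 * u + v - 8 by linarith)]

end OrderedRing

theorem natCast_mul_dWitt (m : ℕ) {k : ℕ} (hk : k ≠ 0) :
    (k : ℚ) * dWitt m k = ∑ d ∈ k.divisors, ((μ d : ℤ) : ℚ) * (m : ℚ) ^ (k / d) := by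
  rw [dWitt, ← mul_assoc, mul_one_div_cancel (Nat.cast_ne_zero.mpr hk), one_mul]

theorem abs_natCast_mul_dWitt_sub_pow_le {m : ℕ} (hm : 2 ≤ m) {k : ℕ} (hk : k ≠ 0) :
    |(k : ℚ) * dWitt m k - (m : ℚ) ^ k| ≤ 2 * (m : ℚ) ^ (k / 2) := by
  rw [natCast_mul_dWitt m hk]
  exact abs_sum_divisors_moebius_mul_pow_sub_pow_le (by exact_mod_cast hm) hk

theorem le_dWitt_of_lt_dWitt_sub_one {m p : ℕ} (hm : 2 ≤ m) (hp : 3 ≤ p)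
    (h : (m : ℚ) * p * ((p : ℚ) - 2) < dWitt m (p - 1)) :
    (m : ℚ) * p * ((p : ℚ) - 2) ≤ dWitt m p := by
  obtain ⟨n, rfl⟩ : ∃ n, p = n + 1 := ⟨p - 1, by omega⟩
  rw [Nat.add_sub_cancel] at h
  push_cast at h ⊢
  have hM : (2 : ℚ) ≤ m := by exact_mod_cast hm
  have hn : (2 : ℚ) ≤ n := by exact_mod_cast (by omega : 2 ≤ n)
  have hupper := (abs_le.mp (abs_natCast_mul_dWitt_sub_pow_le hm (k := n) (by omega))).2
  have hlower := (abs_le.mp (abs_natCast_mul_dWitt_sub_pow_le hm (k := n + 1) (by omega))).1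
  push_cast at hlower
  set u := (m : ℚ) ^ (n / 2)
  have hu : u ^ 2 ≤ (m : ℚ) ^ n := by
    rw [← pow_mul]; exact pow_le_pow_right₀ (by linarith) (by omega)
  have hpow : (m : ℚ) ^ ((n + 1) / 2) ≤ m * u := by
    rw [← pow_succ']; exact pow_le_pow_right₀ (by linarith) (by omega)
  have hX : n * (m * (n + 1) * (n - 1)) < (m : ℚ) ^ n + 2 * u := by
    linarith [mul_lt_mul_of_pos_left h (by linarith : (0 : ℚ) < n)]
  suffices hS : ((n : ℚ) + 1) ^ 2 * (n - 1) ≤ (m : ℚ) ^ n - 2 * u by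
    rw [pow_succ] at hlower
    have : ((n : ℚ) + 1) * (m * (n + 1) * (n + 1 - 2)) ≤ (n + 1) * dWitt m (n + 1) := by
      nlinarith [mul_le_mul_of_nonneg_left hS (by positivity : (0 : ℚ) ≤ m)]
    exact le_of_mul_le_mul_left this (by positivity)
  rcases (by omega : n = 2 ∨ n = 3 ∨ 4 ≤ n) with rfl | rfl | hn4
  · norm_num [u] at hX ⊢
    -- `m > 4` alone would not give `m ^ 2 - 2 * m ≥ 9`; integrality of `m` is needed.
    have hm5 : (5 : ℚ) ≤ m := by
      have : 4 < m := by exact_mod_cast (by nlinarith : (4 : ℚ) < m)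
      exact_mod_cast this
    nlinarith
  · norm_num [u] at hX ⊢
    nlinarith
  · have hn4' : (4 : ℚ) ≤ n := by exact_mod_cast hn4
    obtain ⟨a, ha⟩ : ∃ a : ℚ, (n : ℚ) = a + 1 := ⟨n - 1, by ring⟩
    have ha3 : 3 ≤ a := by linarith
    rw [ha] at hX ⊢
    -- With `p = a + 2`: `S = p²(p-2)` and `v = p(p-2)²`, so `S + v = 2(p-1)p(p-2)`.
    refine le_sub_two_mul_of_add_lt hu (v := (a + 2) * a ^ 2) ?_ (by nlinarith) ?_
    · have hcube : (0 : ℚ) ≤ (a + 1) * (a + 2) * a := by positivity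
      nlinarith [mul_le_mul_of_nonneg_right hM hcube]
    · have hquartic : 24 * a + 32 ≤ a ^ 4 + 2 * a ^ 3 := by
        nlinarith [pow_le_pow_left₀ (by norm_num) ha3 3]
      nlinarith [mul_le_mul_of_nonneg_left hquartic (by positivity : (0 : ℚ) ≤ (a + 2) * a)]

theorem stmt_9 (m p : ℕ) (hm : 2 ≤ m) (hp : 3 ≤ p)
    (h : dWitt m (p - 1) > (m : ℚ) * p * ((p : ℚ) - 2)) :
    1 / (m : ℚ) - ((p : ℚ) - 2) * ((p : ℚ) + 1) / (2 * dWitt m (p - 1)) >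
      ((p : ℚ) - 2) * ((p : ℚ) - 1) / (2 * dWitt m p) := by
  have hM : (2 : ℚ) ≤ m := by exact_mod_cast hm
  have hP : (3 : ℚ) ≤ p := by exact_mod_cast hp
  set C := (m : ℚ) * p * ((p : ℚ) - 2)
  have hC : 0 < C := mul_pos (mul_pos (by linarith) (by linarith)) (by linarith)
  have hsplit : 1 / (m : ℚ) = ((p : ℚ) - 2) * ((p : ℚ) + 1) / (2 * C) +
      ((p : ℚ) - 2) * ((p : ℚ) - 1) / (2 * C) := by
    field_simp
    ring
  have hpred : ((p : ℚ) - 2) * ((p : ℚ) + 1) / (2 * dWitt m (p - 1)) <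
      ((p : ℚ) - 2) * ((p : ℚ) + 1) / (2 * C) :=
    div_lt_div_of_pos_left (by nlinarith) (by linarith) (by linarith)
  have hsucc : ((p : ℚ) - 2) * ((p : ℚ) - 1) / (2 * dWitt m p) ≤
      ((p : ℚ) - 2) * ((p : ℚ) - 1) / (2 * C) :=
    div_le_div_of_nonneg_left (by nlinarith) (by linarith)
      (by linarith [le_dWitt_of_lt_dWitt_sub_one hm hp h])
  linarith
end

section
/- Let (d_1, …, d_8) = (2, 1, 2, 3, 6, 9, 18, 30) (the dimensions d_k(2) of the graded components of the free Lie algebra on 2 generators for k = 1, …, 8), let T₁ = Σ_{j=1}^8 j·d_j and T₂ = Σ_{j=1}^8 j²·d_j, and let vـk = d_k·(k·T₁ − T₂). Then the vector a = (14, 28, 42, 5, −32, −18, −4, 10) satisfies: (i) a_i + a_j ≥ a_{i+j} for all integers i, j ≥ 1 with i + j ≤ 8; and (ii) Σ_{k=1}^8 a_k·v_k = 72828 > 0. -/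
theorem stmt_13 (d a v : ℕ → ℤ)
    (hd : d 1 = 2 ∧ d 2 = 1 ∧ d 3 = 2 ∧ d 4 = 3 ∧ d 5 = 6 ∧ d 6 = 9 ∧ d 7 = 18 ∧ d 8 = 30)
    (ha : a 1 = 14 ∧ a 2 = 28 ∧ a 3 = 42 ∧ a 4 = 5 ∧ a 5 = -32 ∧ a 6 = -18 ∧ a 7 = -4 ∧
      a 8 = 10)
    (hv : ∀ k : ℕ, v k = d k * ((k : ℤ) * ∑ j ∈ Finset.Icc (1 : ℕ) 8, (j : ℤ) * d j
      - ∑ j ∈ Finset.Icc (1 : ℕ) 8, (j : ℤ) ^ 2 * d j)) :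
    (∀ i j : ℕ, 1 ≤ i → 1 ≤ j → i + j ≤ 8 → a (i + j) ≤ a i + a j) ∧
    (∑ k ∈ Finset.Icc (1 : ℕ) 8, a k * v k = 72828) ∧ (0 : ℤ) < 72828 := by
  obtain ⟨d1, d2, d3, d4, d5, d6, d7, d8⟩ := hd
  obtain ⟨a1, a2, a3, a4, a5, a6, a7, a8⟩ := ha
  have hset : Finset.Icc (1:ℕ) 8 = {1,2,3,4,5,6,7,8} := rfl
  have h1 : ∑ j ∈ Finset.Icc (1:ℕ) 8, (j : ℤ) * d j = 472 := by
    rw [hset]; norm_num [d1, d2, d3, d4, d5, d6, d7, d8]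
  have h2 : ∑ j ∈ Finset.Icc (1:ℕ) 8, (j : ℤ) ^ 2 * d j = 3348 := by
    rw [hset]; norm_num [d1, d2, d3, d4, d5, d6, d7, d8]
  refine ⟨?_, ?_, by norm_num⟩
  · intro i j hi hj hij
    have hi7 : i ≤ 7 := by omega
    have hj7 : j ≤ 7 := by omega
    interval_cases i <;> interval_cases j <;> first | omega | (norm_num [a1,a2,a3,a4,a5,a6,a7,a8])
  · rw [hset]
    norm_num [hv, h1, h2, d1, d2, d3, d4, d5, d6, d7, d8, a1, a2, a3, a4, a5, a6, a7, a8]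
end

section
/- Let m ≥ 2 be an integer. There exist positive real numbers x and C satisfying the system of three equations −(m−1)/2 − (1/6)·x·(m² − 1) = (−2m³ − m² + 3m)·C, 1/2 − (1/3)·x·(m + 1) = (−m³ + 2m)·C, and (1/2)·x = (m² + m)·C, if and only if 2 ≤ m ≤ 5; and in that case necessarily x = 3(m+1)/(−m² + 4m + 8) and C = x/(2m(m+1)). -/
/-!
Eliminating `C` with the third equation, the second one becomes linear in `x`:
`x · (-m² + 4m + 8) = 3(m + 1)`, and the first equation is then automatic. A positive solution
therefore exists exactly when `-m² + 4m + 8 > 0`, which for a natural number `m` means `m ≤ 5`.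
-/

/-- The three nilsoliton equations for `f(m,3)`, in the unknowns `x = ξ²` and `C`. -/
def NilsolitonSystem (m x C : ℝ) : Prop :=
  -(m - 1) / 2 - (1 / 6) * x * (m ^ 2 - 1) = (-2 * m ^ 3 - m ^ 2 + 3 * m) * C ∧
    1 / 2 - (1 / 3) * x * (m + 1) = (-m ^ 3 + 2 * m) * C ∧
    (1 / 2) * x = (m ^ 2 + m) * C

namespace NilsolitonSystem

variable {m x C : ℝ}

theorem mul_eq (h : NilsolitonSystem m x C) : x * (-m ^ 2 + 4 * m + 8) = 3 * (m + 1) := by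
  obtain ⟨-, h₂, h₃⟩ := h
  linear_combination (-6 * (m + 1)) * h₂ + (6 * (2 - m ^ 2)) * h₃

theorem C_eq (hm : 0 < m) (h : NilsolitonSystem m x C) : C = x / (2 * m * (m + 1)) := by
  obtain ⟨-, -, h₃⟩ := h
  field_simp
  linear_combination (-2 : ℝ) * h₃

theorem denom_pos (hm : 0 < m) (hx : 0 < x) (h : NilsolitonSystem m x C) :
    0 < -m ^ 2 + 4 * m + 8 :=
  pos_of_mul_pos_right (h.mul_eq ▸ by positivity : 0 < x * (-m ^ 2 + 4 * m + 8)) hx.le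

theorem of_mul_eq (hm : 0 < m) (h : x * (-m ^ 2 + 4 * m + 8) = 3 * (m + 1)) :
    NilsolitonSystem m x (x / (2 * m * (m + 1))) := by
  refine ⟨?_, ?_, ?_⟩ <;> field_simp
  · linear_combination (2 * (m - 1)) * h
  · linear_combination (-1 : ℝ) * h

end NilsolitonSystem

theorem nat_denom_pos_iff (m : ℕ) : 0 < -(m : ℝ) ^ 2 + 4 * m + 8 ↔ m ≤ 5 := by
  constructor
  · intro hD
    by_contra! h
    have h6 : (6 : ℝ) ≤ m := by exact_mod_cast h
    nlinarith
  · intro h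
    have h5 : (m : ℝ) ≤ 5 := by exact_mod_cast h
    nlinarith [m.cast_nonneg (α := ℝ)]

theorem stmt_15 (m : ℕ) (hm : 2 ≤ m) :
    ((∃ x C : ℝ, 0 < x ∧ 0 < C ∧
        -((m : ℝ) - 1) / 2 - (1 / 6) * x * ((m : ℝ) ^ 2 - 1)
          = (-2 * (m : ℝ) ^ 3 - (m : ℝ) ^ 2 + 3 * m) * C ∧
        1 / 2 - (1 / 3) * x * ((m : ℝ) + 1) = (-(m : ℝ) ^ 3 + 2 * m) * C ∧
        (1 / 2) * x = ((m : ℝ) ^ 2 + m) * C) ↔ m ≤ 5) ∧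
    (∀ x C : ℝ, 0 < x → 0 < C →
      (-((m : ℝ) - 1) / 2 - (1 / 6) * x * ((m : ℝ) ^ 2 - 1)
          = (-2 * (m : ℝ) ^ 3 - (m : ℝ) ^ 2 + 3 * m) * C ∧
        1 / 2 - (1 / 3) * x * ((m : ℝ) + 1) = (-(m : ℝ) ^ 3 + 2 * m) * C ∧
        (1 / 2) * x = ((m : ℝ) ^ 2 + m) * C) →
      x = 3 * ((m : ℝ) + 1) / (-(m : ℝ) ^ 2 + 4 * m + 8) ∧
      C = x / (2 * m * ((m : ℝ) + 1))) := by
  have hm₀ : (0 : ℝ) < m := by exact_mod_cast (by omega : 0 < m)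
  refine ⟨⟨?_, fun h5 => ?_⟩, fun x C hx _ h => ?_⟩
  · rintro ⟨x, C, hx, -, h⟩
    exact (nat_denom_pos_iff m).1 (NilsolitonSystem.denom_pos hm₀ hx h)
  · have hD := (nat_denom_pos_iff m).2 h5
    have hxD := div_mul_cancel₀ (3 * ((m : ℝ) + 1)) hD.ne'
    exact ⟨_, _, by positivity, by positivity, NilsolitonSystem.of_mul_eq hm₀ hxD⟩
  · have hD := NilsolitonSystem.denom_pos hm₀ hx h
    exact ⟨eq_div_of_mul_eq hD.ne' (NilsolitonSystem.mul_eq h), NilsolitonSystem.C_eq hm₀ h⟩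
end

section
/- Positive real numbers x, s, C satisfy the system −1/2 − x/2 − (3/4)·s/x = −50·C, 1/2 − x = −28·C, x/2 − (3/4)·s/x = −6·C, and (1/2)·s/x = 16·C, if and only if x = 9/4, s = 9/2, and C = 1/16. -/
theorem stmt_16_general (x s C : ℝ) :
    (-1 / 2 - x / 2 - (3 / 4) * s / x = -50 * C ∧
     1 / 2 - x = -28 * C ∧
     x / 2 - (3 / 4) * s / x = -6 * C ∧
     (1 / 2) * s / x = 16 * C) ↔ (x = 9 / 4 ∧ s = 9 / 2 ∧ C = 1 / 16) := by
  constructor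
  · rintro ⟨-, h2, h3, h4⟩
    -- In the unknowns x, s / x and C the last three equations are linear.
    rw [mul_div_assoc] at h3 h4
    have hC : C = 1 / 16 := by linarith
    have hx : x = 9 / 4 := by linarith
    have hsx : s / x = 2 := by linarith
    rw [div_eq_iff (by rw [hx]; norm_num), hx] at hsx
    exact ⟨hx, by linarith, hC⟩
  · rintro ⟨rfl, rfl, rfl⟩
    norm_num

theorem stmt_16 (x s C : ℝ) (hx : 0 < x) (hs : 0 < s) (hC : 0 < C) :
    (-1 / 2 - x / 2 - (3 / 4) * s / x = -50 * C ∧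
     1 / 2 - x = -28 * C ∧
     x / 2 - (3 / 4) * s / x = -6 * C ∧
     (1 / 2) * s / x = 16 * C) ↔ (x = 9 / 4 ∧ s = 9 / 2 ∧ C = 1 / 16) :=
  stmt_16_general x s C
end

section
/- Let t = (131 + 5·√745)/2928 (the positive root of 5856·t² − 524·t − 1 = 0), and set x = 54·t, s = 3/4 + 375·t, A = 76·t·s, g = 27·t·(1 + 128·t). Then x, s, A, g are positive and satisfy the six equations: −1/2 − x/2 − (3/4)·s/x − (A + g/3)/s = −170·t; 1/2 − x − g/x = −118·t; x/2 − (3/4)·s/x − (1/2)·g/x = −66·t; (1/2)·s/x − (2/9)·g/s − (2/3)·A/s = −14·t; (1/3)·g/s + (1/2)·g/x = 38·t; (1/2)·A/s = 38·t. -/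
/-!
All four unknowns are polynomials in `t`. After clearing the positive denominators `x` and `s`,
each of the six equations becomes a polynomial multiple of `5856 t² - 524 t - 1`, which vanishes
because `t` is a root of it; the second and the sixth equation even hold for every `t`.
-/

lemma quadratic_eq_zero_of_eq_root {t : ℝ} (ht : t = (131 + 5 * Real.sqrt 745) / 2928) :
    5856 * t ^ 2 - 524 * t - 1 = 0 := by
  have hsq : Real.sqrt 745 ^ 2 = 745 := Real.sq_sqrt (by norm_num)
  subst ht
  linear_combination (5856 * 25 / 2928 ^ 2 : ℝ) * hsq

theorem nilsoliton_equations_of_quadratic {t x s A g : ℝ} (ht : 0 < t)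
    (hq : 5856 * t ^ 2 - 524 * t - 1 = 0)
    (hx : x = 54 * t) (hs : s = 3 / 4 + 375 * t) (hA : A = 76 * t * s)
    (hg : g = 27 * t * (1 + 128 * t)) :
    0 < x ∧ 0 < s ∧ 0 < A ∧ 0 < g ∧
    -1 / 2 - x / 2 - (3 / 4) * s / x - (A + g / 3) / s = -170 * t ∧
    1 / 2 - x - g / x = -118 * t ∧
    x / 2 - (3 / 4) * s / x - (1 / 2) * g / x = -66 * t ∧
    (1 / 2) * s / x - (2 / 9) * g / s - (2 / 3) * A / s = -14 * t ∧
    (1 / 3) * g / s + (1 / 2) * g / x = 38 * t ∧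
    (1 / 2) * A / s = 38 * t := by
  subst hx hg hA hs
  have hx0 : 0 < 54 * t := by positivity
  have hs0 : 0 < 3 / 4 + 375 * t := by positivity
  refine ⟨hx0, hs0, by positivity, by positivity, ?_, ?_, ?_, ?_, ?_, ?_⟩
  all_goals field_simp
  · linear_combination (162 + 84888 * t) * hq
  · ring
  · linear_combination 18 * hq
  · linear_combination (-243 - 115668 * t) * hq
  · linear_combination (-243) * hq
  · ring

theorem stmt_18 (t x s A g : ℝ)
    (ht : t = (131 + 5 * Real.sqrt 745) / 2928)
    (hx : x = 54 * t) (hs : s = 3 / 4 + 375 * t) (hA : A = 76 * t * s)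
    (hg : g = 27 * t * (1 + 128 * t)) :
    0 < x ∧ 0 < s ∧ 0 < A ∧ 0 < g ∧
    -1 / 2 - x / 2 - (3 / 4) * s / x - (A + g / 3) / s = -170 * t ∧
    1 / 2 - x - g / x = -118 * t ∧
    x / 2 - (3 / 4) * s / x - (1 / 2) * g / x = -66 * t ∧
    (1 / 2) * s / x - (2 / 9) * g / s - (2 / 3) * A / s = -14 * t ∧
    (1 / 3) * g / s + (1 / 2) * g / x = 38 * t ∧
    (1 / 2) * A / s = 38 * t := by
  have ht0 : 0 < t := by rw [ht]; positivity
  exact nilsoliton_equations_of_quadratic ht0 (quadratic_eq_zero_of_eq_root ht) hx hs hA hg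
end

section
/- There do not exist positive real numbers x, s, g, A, θ, D, K, C satisfying the system of eight equations: 1/2 − x − g/x − (3/2)·D/s = −334·C; x/2 − (3/4)·s/x − (1/2)·g/x − (1/2)·θ/x² = −228·C; (1/2)·s/x − (2/9)·g/s − (2/3)·A/s − (1/2)·D/s = −122·C; (1/3)·g/s + (1/2)·g/x − (1/2)·θ/g − (3/4)·D/g = −16·C; (1/2)·A/s − (5/8)·K/A − (25/32)·D/A = −16·C; θ/g + (1/2)·θ/x² = 90·C; (1/2)·D/g + (1/2)·D/s + (25/24)·D/A = 90·C; (1/2)·K/A = 90·C. (Indeed, the combination 2·(eq2) + 3·(eq3) + 2·(eq4) + 4·(eq5) + 2·(eq6) + 3·(eq7) + 5·(eq8) yields x + θ/g = −18·C < 0, a contradiction.) -/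
theorem stmt_19 :
    ¬∃ x s g A θ D K C : ℝ, 0 < x ∧ 0 < s ∧ 0 < g ∧ 0 < A ∧ 0 < θ ∧ 0 < D ∧ 0 < K ∧ 0 < C ∧
      1 / 2 - x - g / x - (3 / 2) * D / s = -334 * C ∧
      x / 2 - (3 / 4) * s / x - (1 / 2) * g / x - (1 / 2) * θ / x ^ 2 = -228 * C ∧
      (1 / 2) * s / x - (2 / 9) * g / s - (2 / 3) * A / s - (1 / 2) * D / s = -122 * C ∧
      (1 / 3) * g / s + (1 / 2) * g / x - (1 / 2) * θ / g - (3 / 4) * D / g = -16 * C ∧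
      (1 / 2) * A / s - (5 / 8) * K / A - (25 / 32) * D / A = -16 * C ∧
      θ / g + (1 / 2) * θ / x ^ 2 = 90 * C ∧
      (1 / 2) * D / g + (1 / 2) * D / s + (25 / 24) * D / A = 90 * C ∧
      (1 / 2) * K / A = 90 * C := by
  rintro ⟨x, s, g, A, θ, D, K, C, hx, hs, hg, hA, hθ, hD, hK, hC,
    h1, h2, h3, h4, h5, h6, h7, h8⟩
  have htg : 0 < θ / g := div_pos hθ hg
  have key : x + θ / g = -18 * C := by
    linear_combination 2*h2 + 3*h3 + 2*h4 + 4*h5 + 2*h6 + 3*h7 + 5*h8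
  linarith
end
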